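/- With c_i := (g_i g_{i−1} ⋯ g_1)(g_1 g_2 ⋯ g_i) for 1 ≤ i ≤ m−1, one has c_1 c_2 ⋯ c_{m−1} = Γ_m². (This is the braid-relation identity underlying the paper's equation C = γ².) -/

import Mathlib

/-!
Write `D j = g_j ⋯ g_1` and `A j = g_1 ⋯ g_j`, so that `c_j = D j * A j` and
`Γ (j+1) = Γ j * D j`. The braid relations give `g_i * D j = D j * g_(i+1)` and
`g_(i+1) * A j = A j * g_i` for `i < j`, hence `c_j` commutes with `g_1, …, g_(j-1)` and
therefore with `Γ j`. Since `g_(j+1)` commutes with `Γ j`, induction also gives the second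
reduced expression `Γ (j+1) = A j * Γ j`. Then
`c_1 ⋯ c_(j+1) = Γ (j+1) * Γ (j+1) * D (j+1) * A (j+1)`
`= Γ (j+1) * D (j+1) * A (j+1) * Γ (j+1) = Γ (j+2) * Γ (j+2)`.
-/

/-- The descending product `g_a g_{a−1} ⋯ g_c` (for `a ≥ c`). -/
def braidDesc {M : Type*} [Monoid M] (g : ℕ → M) (a c : ℕ) : M :=
  ((List.range (a + 1 - c)).map fun k => g (a - k)).prod

/-- The ascending product `g_c g_{c+1} ⋯ g_a` (for `a ≥ c`). -/
def braidAsc {M : Type*} [Monoid M] (g : ℕ → M) (c a : ℕ) : M :=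
  ((List.range (a + 1 - c)).map fun k => g (c + k)).prod

/-- The canonical positive lift `Γ` of the longest elements:
`Γ 1 = 1` and `Γ (k+1) = Γ k · (g_k g_{k−1} ⋯ g_1)`. -/
def braidGamma {M : Type*} [Monoid M] (g : ℕ → M) : ℕ → M
  | 0 => 1
  | k + 1 => braidGamma g k * braidDesc g k 1

section

variable {M : Type*} [Monoid M] {g : ℕ → M} {N : ℕ}

def BraidRelations (g : ℕ → M) (N : ℕ) : Prop :=
  ∀ k, 1 ≤ k → k + 1 ≤ N → g k * g (k + 1) * g k = g (k + 1) * g k * g (k + 1)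

def FarCommute (g : ℕ → M) (N : ℕ) : Prop :=
  ∀ i j, 1 ≤ i → 1 ≤ j → i ≤ N → j ≤ N → (i + 2 ≤ j ∨ j + 2 ≤ i) → g i * g j = g j * g i

theorem FarCommute.commute (h : FarCommute g N) {i j : ℕ} (hi : 1 ≤ i) (hij : i + 2 ≤ j)
    (hj : j ≤ N) : Commute (g i) (g j) :=
  h i j hi (by omega) (by omega) hj (.inl hij)

theorem braidDesc_succ (g : ℕ → M) {a c : ℕ} (hc : c ≤ a + 1) :
    braidDesc g (a + 1) c = g (a + 1) * braidDesc g a c := by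
  rw [braidDesc, show a + 1 + 1 - c = a + 1 - c + 1 by omega, List.range_succ_eq_map,
    List.map_cons, List.prod_cons, List.map_map, braidDesc]
  refine congrArg (g (a + 1) * ·) (congrArg List.prod (List.map_congr_left fun k hk => ?_))
  rw [List.mem_range] at hk
  simp only [Function.comp_apply]
  congr 1
  omega

theorem braidAsc_succ (g : ℕ → M) {c a : ℕ} (hc : c ≤ a + 1) :
    braidAsc g c (a + 1) = braidAsc g c a * g (a + 1) := by
  rw [braidAsc, show a + 1 + 1 - c = a + 1 - c + 1 by omega, List.range_succ, List.map_append,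
    List.prod_append, braidAsc]
  simp only [List.map_cons, List.map_nil, List.prod_cons, List.prod_nil, mul_one]
  congr 2
  omega

theorem commute_braidDesc {x : M} {a c : ℕ} (h : ∀ k, c ≤ k → k ≤ a → Commute x (g k)) :
    Commute x (braidDesc g a c) :=
  Commute.list_prod_right _ _ fun y hy => by
    obtain ⟨k, hk, rfl⟩ := List.mem_map.1 hy
    exact h _ (by simp at hk; omega) (by omega)

theorem commute_braidAsc {x : M} {c a : ℕ} (h : ∀ k, c ≤ k → k ≤ a → Commute x (g k)) :
    Commute x (braidAsc g c a) :=
  Commute.list_prod_right _ _ fun y hy => by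
    obtain ⟨k, hk, rfl⟩ := List.mem_map.1 hy
    exact h _ (by omega) (by simp at hk; omega)

theorem commute_braidGamma {x : M} {n : ℕ} (h : ∀ k, 1 ≤ k → k < n → Commute x (g k)) :
    Commute x (braidGamma g n) := by
  induction n with
  | zero => exact Commute.one_right x
  | succ n ih =>
    exact (ih fun k hk hkn => h k hk (by omega)).mul_right
      (commute_braidDesc fun k hk hkn => h k hk (by omega))

theorem mul_braidDesc_of_lt (hb : BraidRelations g N) (hc : FarCommute g N) {i j : ℕ}
    (hi : 1 ≤ i) (hij : i < j) (hj : j ≤ N) :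
    g i * braidDesc g j 1 = braidDesc g j 1 * g (i + 1) := by
  induction j, hij using Nat.le_induction with
  | base =>
    obtain ⟨i, rfl⟩ : ∃ i', i = i' + 1 := ⟨i - 1, by omega⟩
    have hfar : Commute (g (i + 2)) (braidDesc g i 1) :=
      commute_braidDesc fun k hk hki => (hc.commute hk (by omega) hj).symm
    have hbraid : g (i + 1) * g (i + 2) * g (i + 1) = g (i + 2) * g (i + 1) * g (i + 2) :=
      hb (i + 1) hi hj
    rw [braidDesc_succ g (by omega), braidDesc_succ g (by omega)]
    calc g (i + 1) * (g (i + 2) * (g (i + 1) * braidDesc g i 1))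
        = g (i + 2) * g (i + 1) * (g (i + 2) * braidDesc g i 1) := by
          rw [← mul_assoc, ← mul_assoc, hbraid]; simp only [mul_assoc]
      _ = g (i + 2) * (g (i + 1) * braidDesc g i 1) * g (i + 2) := by
          rw [hfar.eq]; simp only [mul_assoc]
  | succ j hij ih =>
    rw [braidDesc_succ g (by omega), ← mul_assoc,
      (hc.commute hi (by omega) hj).eq, mul_assoc, ih (by omega), mul_assoc]

theorem mul_braidAsc_of_lt (hb : BraidRelations g N) (hc : FarCommute g N) {i j : ℕ}
    (hi : 1 ≤ i) (hij : i < j) (hj : j ≤ N) :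
    g (i + 1) * braidAsc g 1 j = braidAsc g 1 j * g i := by
  induction j, hij using Nat.le_induction with
  | base =>
    obtain ⟨i, rfl⟩ : ∃ i', i = i' + 1 := ⟨i - 1, by omega⟩
    have hfar : Commute (g (i + 2)) (braidAsc g 1 i) :=
      commute_braidAsc fun k hk hki => (hc.commute hk (by omega) hj).symm
    have hbraid : g (i + 1) * g (i + 2) * g (i + 1) = g (i + 2) * g (i + 1) * g (i + 2) :=
      hb (i + 1) hi hj
    rw [braidAsc_succ g (by omega), braidAsc_succ g (by omega)]
    calc g (i + 2) * (braidAsc g 1 i * g (i + 1) * g (i + 2))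
        = braidAsc g 1 i * (g (i + 2) * g (i + 1) * g (i + 2)) := by
          rw [← mul_assoc, ← mul_assoc, hfar.eq]; simp only [mul_assoc]
      _ = braidAsc g 1 i * g (i + 1) * g (i + 2) * g (i + 1) := by
          rw [← hbraid]; simp only [mul_assoc]
  | succ j hij ih =>
    rw [braidAsc_succ g (by omega), ← mul_assoc, ih (by omega), mul_assoc,
      (hc.commute hi (by omega) hj).eq, mul_assoc]

theorem commute_braidDesc_mul_braidAsc (hb : BraidRelations g N) (hc : FarCommute g N)
    {i j : ℕ} (hi : 1 ≤ i) (hij : i < j) (hj : j ≤ N) :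
    Commute (g i) (braidDesc g j 1 * braidAsc g 1 j) := by
  rw [Commute, SemiconjBy, ← mul_assoc, mul_braidDesc_of_lt hb hc hi hij hj, mul_assoc,
    mul_braidAsc_of_lt hb hc hi hij hj, mul_assoc]

theorem braidGamma_succ_eq_braidAsc_mul (hc : FarCommute g N) {j : ℕ} (hj : j ≤ N) :
    braidGamma g (j + 1) = braidAsc g 1 j * braidGamma g j := by
  induction j with
  | zero => simp [braidGamma, braidDesc, braidAsc]
  | succ j ih =>
    have hfar : Commute (g (j + 1)) (braidGamma g j) :=
      commute_braidGamma fun k hk hkj => (hc.commute hk (by omega) hj).symm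
    calc braidGamma g (j + 1 + 1)
        = braidAsc g 1 j * (braidGamma g j * g (j + 1)) * braidDesc g j 1 := by
          rw [braidGamma, braidDesc_succ g (by omega), ih (by omega)]; simp only [mul_assoc]
      _ = braidAsc g 1 (j + 1) * braidGamma g (j + 1) := by
          rw [← hfar.eq, braidAsc_succ g (by omega), braidGamma]; simp only [mul_assoc]

theorem prod_braidDesc_mul_braidAsc (hb : BraidRelations g N) (hc : FarCommute g N) {j : ℕ}
    (hj : j ≤ N) :
    ((List.range j).map fun k => braidDesc g (k + 1) 1 * braidAsc g 1 (k + 1)).prod =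
      braidGamma g (j + 1) * braidGamma g (j + 1) := by
  induction j with
  | zero => simp [braidGamma, braidDesc]
  | succ j ih =>
    have hcentral : Commute (braidDesc g (j + 1) 1 * braidAsc g 1 (j + 1))
        (braidGamma g (j + 1)) :=
      commute_braidGamma fun k hk hkj => (commute_braidDesc_mul_braidAsc hb hc hk hkj hj).symm
    calc ((List.range (j + 1)).map fun k => braidDesc g (k + 1) 1 * braidAsc g 1 (k + 1)).prod
        = braidGamma g (j + 1) * braidDesc g (j + 1) 1 *
            (braidAsc g 1 (j + 1) * braidGamma g (j + 1)) := by
          rw [List.prod_range_succ, ih (by omega), mul_assoc, ← hcentral.eq]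
          simp only [mul_assoc]
      _ = braidGamma g (j + 2) * braidGamma g (j + 2) := by
          rw [← braidGamma_succ_eq_braidAsc_mul hc hj]; rfl

end

theorem braidC_prod_eq_gamma_sq_general
    {M : Type*} [Monoid M] (m : ℕ) (g : ℕ → M)
    (hbraid : ∀ k, 1 ≤ k → k + 1 ≤ m - 1 →
      g k * g (k + 1) * g k = g (k + 1) * g k * g (k + 1))
    (hcomm : ∀ i j, 1 ≤ i → 1 ≤ j → i ≤ m - 1 → j ≤ m - 1 →
      (i + 2 ≤ j ∨ j + 2 ≤ i) → g i * g j = g j * g i) :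
    ((List.range (m - 1)).map fun k => braidDesc g (k + 1) 1 * braidAsc g 1 (k + 1)).prod =
      braidGamma g m * braidGamma g m := by
  rcases m with _ | n
  · simp [braidGamma]
  · exact prod_braidDesc_mul_braidAsc hbraid hcomm le_rfl

/-- Let `M` be a monoid, `m ≥ 2`, and let `g 1, …, g (m−1)` satisfy the
type-A braid relations.  With `c_i := (g_i ⋯ g_1)(g_1 ⋯ g_i)`, one has
`c_1 c_2 ⋯ c_{m−1} = Γ_m²` — the braid identity underlying `C = γ²`. -/
theorem braidC_prod_eq_gamma_sq
    {M : Type*} [Monoid M] (m : ℕ) (hm : 2 ≤ m) (g : ℕ → M)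
    (hbraid : ∀ k, 1 ≤ k → k + 1 ≤ m - 1 →
      g k * g (k + 1) * g k = g (k + 1) * g k * g (k + 1))
    (hcomm : ∀ i j, 1 ≤ i → 1 ≤ j → i ≤ m - 1 → j ≤ m - 1 →
      (i + 2 ≤ j ∨ j + 2 ≤ i) → g i * g j = g j * g i) :
    ((List.range (m - 1)).map fun k => braidDesc g (k + 1) 1 * braidAsc g 1 (k + 1)).prod =
      braidGamma g m * braidGamma g m :=
  braidC_prod_eq_gamma_sq_general m g hbraid hcomm
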